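/- arXiv:1205.0076 — 2 statements merged into one kernel-verified Lean document; each statement's English description precedes it below -/
import Mathlib

section
/- Let f°∈F(λ0) be an equilibrium flow. Then for every non-destination node 0≤v<n, the quantity d_v produced by the backward recursion satisfies d_v ≥ R(f°), the minimal node residual capacity of the network. In particular d_0 ≥ R(f°). -/
open Filter Set Topology MeasureTheory
open scoped BigOperators ENNReal

noncomputable section

/-- A flow network: a finite directed multigraph on node set `{0, 1, ..., n}`
(origin `0`, destination `n`) in which every link `e` satisfies `σ(e) < τ(e)`. -/
structure FlowNetwork where
  n : ℕ
  npos : 0 < n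
  E : Type
  fintE : Fintype E
  decE : DecidableEq E
  /-- the tail node σ(e) -/
  src : E → Fin (n + 1)
  /-- the head node τ(e) -/
  dst : E → Fin (n + 1)
  src_lt_dst : ∀ e, src e < dst e

attribute [instance] FlowNetwork.fintE FlowNetwork.decE

namespace FlowNetwork

variable (N : FlowNetwork)

def origin : Fin (N.n + 1) := 0

def destination : Fin (N.n + 1) := Fin.last N.n

/-- E⁺_v, the set of outgoing links of a node `v` -/
def outLinks (v : Fin (N.n + 1)) : Finset N.E :=
  Finset.univ.filter fun e => N.src e = v

/-- E⁻_v, the set of incoming links of a node `v` -/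
def inLinks (v : Fin (N.n + 1)) : Finset N.E :=
  Finset.univ.filter fun e => N.dst e = v

/-- `IsWalk p u w` : the list of links `p` forms a path leading from node `u` to node `w`. -/
def IsWalk : List N.E → Fin (N.n + 1) → Fin (N.n + 1) → Prop
  | [], u, w => u = w
  | e :: p, u, w => N.src e = u ∧ IsWalk p (N.dst e) w

/-- every node lies on a path from the origin to the destination -/
def Connected : Prop :=
  ∀ v, (∃ p, N.IsWalk p N.origin v) ∧ ∃ p, N.IsWalk p v N.destination

/-- tree-like topology: the only node reachable from the origin by two distinct paths
is the destination -/
def TreeLike : Prop :=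
  ∀ v p q, N.IsWalk p N.origin v → N.IsWalk q N.origin v → p ≠ q → v = N.destination

/-- `f ∈ F(λ0)`: the set of equilibrium flows for inflow `λ0`. -/
def IsEquilibriumFlow (fmax : N.E → ℝ) (lam0 : ℝ) (f : N.E → ℝ) : Prop :=
  (∀ e, f e ∈ Icc 0 (fmax e)) ∧
  (∑ e ∈ N.outLinks N.origin, f e = lam0) ∧
  ∀ v, v ≠ N.origin → v ≠ N.destination →
    ∑ e ∈ N.outLinks v, f e = ∑ e ∈ N.inLinks v, f e

/-- an origin-destination cut -/
def IsCut (U : Finset (Fin (N.n + 1))) : Prop := N.origin ∈ U ∧ N.destination ∉ U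

/-- E⁺_U, the links with tail in `U` and head outside `U` -/
def cutOutLinks (U : Finset (Fin (N.n + 1))) : Finset N.E :=
  Finset.univ.filter fun e => N.src e ∈ U ∧ N.dst e ∉ U

/-- E⁻_U, the links with tail outside `U` and head in `U` -/
def cutInLinks (U : Finset (Fin (N.n + 1))) : Finset N.E :=
  Finset.univ.filter fun e => N.src e ∉ U ∧ N.dst e ∈ U

/-- the capacity C(U) of a cut -/
def cutCapacity (fmax : N.E → ℝ) (U : Finset (Fin (N.n + 1))) : ℝ :=
  ∑ e ∈ N.cutOutLinks U, fmax e

/-- the min-cut capacity C of the network -/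
def minCutCapacity (fmax : N.E → ℝ) : ℝ :=
  sInf {c | ∃ U, N.IsCut U ∧ c = N.cutCapacity fmax U}

/-- the residual capacity R_v(f) of a node `v` -/
def residualCapacity (fmax f : N.E → ℝ) (v : Fin (N.n + 1)) : ℝ :=
  ∑ e ∈ N.outLinks v, (fmax e - f e)

/-- the minimal node residual capacity R(f) of the network -/
def minResidualCapacity (fmax f : N.E → ℝ) : ℝ :=
  sInf {r | ∃ v, v ≠ N.destination ∧ r = N.residualCapacity fmax f v}

/-- the set X_v(λ), viewed as vectors supported on E⁺_v -/
def Xset (fmax : N.E → ℝ) (v : Fin (N.n + 1)) (lam : ℝ) : Set (N.E → ℝ) :=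
  {x | (∀ e ∈ N.outLinks v, x e ∈ Icc 0 (fmax e)) ∧ (∀ e ∉ N.outLinks v, x e = 0) ∧
    ∑ e ∈ N.outLinks v, (fmax e - x e) ≤ lam}

/-- the cost c_v(x) = Σ_{e ∈ E⁺_v} min{x_e, d_{τ(e)}}, valued in `[0,∞]`
(with the convention `min{x, +∞} = x`) -/
def cval (d : Fin (N.n + 1) → ℝ≥0∞) (v : Fin (N.n + 1)) (x : N.E → ℝ) : ℝ≥0∞ :=
  ∑ e ∈ N.outLinks v, min (ENNReal.ofReal (x e)) (d (N.dst e))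

/-- `d` is the backward recursion: `d_n = +∞` and
`d_v = min { c_v(x) : x ∈ X_v(λ°_v) }` for `v < n`, where `λ°_v = Σ_{e ∈ E⁺_v} f°_e`. -/
def IsBackwardRecursion (fmax f : N.E → ℝ) (d : Fin (N.n + 1) → ℝ≥0∞) : Prop :=
  d N.destination = ⊤ ∧
  ∀ v, v ≠ N.destination →
    d v = sInf (N.cval d v '' N.Xset fmax v (∑ e ∈ N.outLinks v, f e))

end FlowNetwork

end

/-!
Descending induction along the links, which all point to larger nodes. Every `x ∈ X_v(λ°_v)`
ships at least `Σ_e x_e ≥ R_v(f°) ≥ R(f°)` out of `v`, and by induction each head `τ(e)` has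
`d_{τ(e)} ≥ R(f°)`. Capping the summands at `R(f°)` therefore gives
`c_v(x) ≥ Σ_e min{x_e, R(f°)} ≥ R(f°)`: either a single summand already reaches `R(f°)`, or
none is capped and the sum is `Σ_e x_e`.
-/

theorem le_sum_min_of_le_sum {ι M : Type*} [AddCommMonoid M] [LinearOrder M]
    [IsOrderedAddMonoid M] [CanonicallyOrderedAdd M] {s : Finset ι} {a : ι → M} {r : M}
    (hr : r ≤ ∑ i ∈ s, a i) : r ≤ ∑ i ∈ s, min (a i) r := by
  by_cases hcap : ∃ i ∈ s, r ≤ a i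
  · obtain ⟨i, hi, hri⟩ := hcap
    calc r = min (a i) r := (min_eq_right hri).symm
      _ ≤ ∑ j ∈ s, min (a j) r :=
        Finset.single_le_sum (f := fun j => min (a j) r) (fun _ _ => zero_le) hi
  · push Not at hcap
    rwa [Finset.sum_congr rfl fun i hi => min_eq_left (hcap i hi).le]

namespace FlowNetwork

variable {N : FlowNetwork}

theorem src_lt_dst_of_mem_outLinks {v : Fin (N.n + 1)} {e : N.E} (he : e ∈ N.outLinks v) :
    v < N.dst e := by
  obtain rfl : N.src e = v := (Finset.mem_filter.1 he).2
  exact N.src_lt_dst e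

theorem minResidualCapacity_le (fmax f : N.E → ℝ) {v : Fin (N.n + 1)}
    (hv : v ≠ N.destination) : N.minResidualCapacity fmax f ≤ N.residualCapacity fmax f v := by
  have hfin : {r | ∃ v, v ≠ N.destination ∧ r = N.residualCapacity fmax f v}.Finite :=
    (Set.finite_range (N.residualCapacity fmax f)).subset fun _ ⟨w, _, hw⟩ => ⟨w, hw.symm⟩
  exact csInf_le hfin.bddBelow ⟨v, hv, rfl⟩

theorem residualCapacity_le_sum_of_mem_Xset {fmax f x : N.E → ℝ} {v : Fin (N.n + 1)}
    (hx : x ∈ N.Xset fmax v (∑ e ∈ N.outLinks v, f e)) :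
    N.residualCapacity fmax f v ≤ ∑ e ∈ N.outLinks v, x e := by
  have hslack := hx.2.2
  simp only [residualCapacity, Finset.sum_sub_distrib] at hslack ⊢
  linarith

theorem ofReal_le_cval {d : Fin (N.n + 1) → ℝ≥0∞} {v : Fin (N.n + 1)} {x : N.E → ℝ} {r : ℝ}
    (hx : ∀ e ∈ N.outLinks v, 0 ≤ x e) (hr : r ≤ ∑ e ∈ N.outLinks v, x e)
    (hd : ∀ e ∈ N.outLinks v, ENNReal.ofReal r ≤ d (N.dst e)) :
    ENNReal.ofReal r ≤ N.cval d v x := by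
  have hsum : ENNReal.ofReal r ≤ ∑ e ∈ N.outLinks v, ENNReal.ofReal (x e) := by
    rw [← ENNReal.ofReal_sum_of_nonneg hx]
    exact ENNReal.ofReal_le_ofReal hr
  calc ENNReal.ofReal r
      ≤ ∑ e ∈ N.outLinks v, min (ENNReal.ofReal (x e)) (ENNReal.ofReal r) :=
        le_sum_min_of_le_sum hsum
    _ ≤ N.cval d v x := Finset.sum_le_sum fun e he => min_le_min le_rfl (hd e he)

theorem IsBackwardRecursion.ofReal_le {fmax f : N.E → ℝ} {d : Fin (N.n + 1) → ℝ≥0∞}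
    (hd : N.IsBackwardRecursion fmax f d) {r : ℝ}
    (hr : ∀ v, v ≠ N.destination → r ≤ N.residualCapacity fmax f v) (v : Fin (N.n + 1)) :
    ENNReal.ofReal r ≤ d v := by
  induction v using WellFoundedGT.induction with
  | _ v ih =>
    by_cases hv : v = N.destination
    · simp [hv, hd.1]
    rw [hd.2 v hv]
    refine le_sInf ?_
    rintro _ ⟨x, hx, rfl⟩
    exact ofReal_le_cval (fun e he => (hx.1 e he).1)
      ((hr v hv).trans (residualCapacity_le_sum_of_mem_Xset hx))
      (fun e he => ih _ (src_lt_dst_of_mem_outLinks he))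

end FlowNetwork

theorem d_ge_min_residual_general (N : FlowNetwork)
    (fmax : N.E → ℝ)
    (f : N.E → ℝ)
    (d : Fin (N.n + 1) → ℝ≥0∞) (hd : N.IsBackwardRecursion fmax f d) :
    (∀ v, v ≠ N.destination →
      ENNReal.ofReal (N.minResidualCapacity fmax f) ≤ d v) ∧
    ENNReal.ofReal (N.minResidualCapacity fmax f) ≤ d N.origin := by
  have hle : ∀ v, ENNReal.ofReal (N.minResidualCapacity fmax f) ≤ d v :=
    hd.ofReal_le fun _ hv => N.minResidualCapacity_le fmax f hv
  exact ⟨fun v _ => hle v, hle N.origin⟩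

/-- For an equilibrium flow `f° ∈ F(λ0)`, every `d_v` from the backward recursion is
bounded below by the minimal node residual capacity `R(f°)`; in particular
`d_0 ≥ R(f°)`. -/
theorem d_ge_min_residual (N : FlowNetwork) (hconn : N.Connected)
    (fmax : N.E → ℝ) (hfmax : ∀ e, 0 < fmax e)
    (lam0 : ℝ) (hlam0 : 0 ≤ lam0)
    (f : N.E → ℝ) (hf : N.IsEquilibriumFlow fmax lam0 f)
    (d : Fin (N.n + 1) → ℝ≥0∞) (hd : N.IsBackwardRecursion fmax f d) :
    (∀ v, v ≠ N.destination →
      ENNReal.ofReal (N.minResidualCapacity fmax f) ≤ d v) ∧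
    ENNReal.ofReal (N.minResidualCapacity fmax f) ≤ d N.origin :=
  d_ge_min_residual_general N fmax f d hd
end

section
/- Consider the tree-like network with nodes V={0,1,2} (origin 0, destination 2) and links e1 from 0 to 2, e2 from 0 to 1, and e3, e4 from 1 to 2, with maximum flow capacities f^max_{e1}=3, f^max_{e2}=1.5, f^max_{e3}=f^max_{e4}=0.75, constant inflow λ0=2, a locally responsive distributed routing policy G, and an equilibrium density vector ρ° whose equilibrium flows are f°_{e1}=f°_{e2}=1 and f°_{e3}=f°_{e4}=0.5, so that the minimal node residual capacity is R(f°)=0.5. Then every admissible perturbation of magnitude at most 0.6 leaves the perturbed dynamical network transferring with respect to the initial density ρ°; consequently the margin of resilience satisfies γ(ρ°) ≥ 0.6 > R(f°), i.e., with finite density capacities the margin of resilience can strictly exceed the minimal node residual capacity. -/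
open Filter Set Topology MeasureTheory
open scoped BigOperators ENNReal

noncomputable section

namespace FlowNetwork

variable (N : FlowNetwork)

/-! ### Dynamical networks -/

/-- the state space Γ_v for the routing decision at node `v`
(constraints on the outgoing links of `v` only) -/
def gammaV (ρmax : N.E → ℝ) (v : Fin (N.n + 1)) : Set (N.E → ℝ) :=
  {x | ∀ e ∈ N.outLinks v, x e ∈ Ico 0 (ρmax e)}

/-- the state space Γ_J for a subset `J` of links -/
def gammaJ (ρmax : N.E → ℝ) (J : Finset N.E) : Set (N.E → ℝ) :=
  {x | ∀ e ∈ J, x e ∈ Ico 0 (ρmax e)}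

/-- the closure of the state space Γ = ∏_e [0, ρ^max_e) -/
def clGamma (ρmax : N.E → ℝ) : Set (N.E → ℝ) :=
  {x | ∀ e, x e ∈ Icc 0 (ρmax e)}

/-- `μ` is a family of flow functions for the density capacities `ρmax`:
each `μ_e : [0, ρ^max_e] → ℝ₊` is continuously differentiable and strictly increasing
on `[0, ρ^max_e)` and satisfies `μ_e(0) = μ_e(ρ^max_e) = 0`. -/
def IsFlowFunctions (ρmax : N.E → ℝ) (μ : N.E → ℝ → ℝ) : Prop :=
  ∀ e, (∀ x ∈ Icc 0 (ρmax e), 0 ≤ μ e x) ∧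
    ContDiffOn ℝ 1 (μ e) (Ico 0 (ρmax e)) ∧
    StrictMonoOn (μ e) (Ico 0 (ρmax e)) ∧
    μ e 0 = 0 ∧ μ e (ρmax e) = 0

/-- `fmax` is the family of maximum flow capacities:
`f^max_e = lim_{ρ_e ↑ ρ^max_e} μ_e(ρ_e)`. -/
def HasMaxFlowCapacities (ρmax : N.E → ℝ) (μ : N.E → ℝ → ℝ) (fmax : N.E → ℝ) : Prop :=
  ∀ e, Tendsto (μ e) (𝓝[<] ρmax e) (𝓝 (fmax e))

/-- `G` is a locally responsive distributed routing policy: for every non-destination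
node `v`, `G^v` depends only on the densities of the outgoing links of `v`, takes values
in the simplex of probability vectors over `E⁺_v`, is continuously differentiable on `Γ_v`,
and satisfies properties (a) and (b). -/
def IsLocallyResponsive (ρmax : N.E → ℝ)
    (G : Fin (N.n + 1) → (N.E → ℝ) → N.E → ℝ) : Prop :=
  ∀ v, v ≠ N.destination →
    -- local information constraint
    (∀ x y : N.E → ℝ, (∀ e ∈ N.outLinks v, x e = y e) → G v x = G v y) ∧
    -- `G^v` maps `Γ_v` into the simplex `S_v` of probability vectors over `E⁺_v`
    (∀ x ∈ N.gammaV ρmax v, (∀ e, 0 ≤ G v x e) ∧ (∀ e ∉ N.outLinks v, G v x e = 0) ∧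
      ∑ e ∈ N.outLinks v, G v x e = 1) ∧
    -- continuous differentiability
    (∀ e, ContDiffOn ℝ 1 (fun x => G v x e) (N.gammaV ρmax v)) ∧
    -- property (a)
    (∀ J : Finset N.E, J ⊆ N.outLinks v → J.Nonempty → J ≠ N.outLinks v →
      ∃ GJ : (N.E → ℝ) → N.E → ℝ,
        (∀ j ∈ J, ContDiffOn ℝ 1 (fun x => GJ x j) (N.gammaJ ρmax J)) ∧
        (∀ x ∈ N.gammaJ ρmax J, (∀ j ∈ J, 0 ≤ GJ x j) ∧ ∑ j ∈ J, GJ x j = 1) ∧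
        ∀ xJ ∈ N.gammaJ ρmax J,
          (∀ e ∈ N.outLinks v \ J,
            Tendsto (fun x => G v x e)
              (𝓝[N.gammaV ρmax v] fun e' => if e' ∈ N.outLinks v \ J then ρmax e' else xJ e')
              (𝓝 0) ∧
            G v (fun e' => if e' ∈ N.outLinks v \ J then ρmax e' else xJ e') e = 0) ∧
          (∀ j ∈ J,
            Tendsto (fun x => G v x j)
              (𝓝[N.gammaV ρmax v] fun e' => if e' ∈ N.outLinks v \ J then ρmax e' else xJ e')
              (𝓝 (GJ xJ j)) ∧
            G v (fun e' => if e' ∈ N.outLinks v \ J then ρmax e' else xJ e') j = GJ xJ j)) ∧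
    -- property (b)
    (∀ j ∈ N.outLinks v, ∀ e ∈ N.outLinks v, j ≠ e → ∀ x ∈ N.gammaV ρmax v,
      0 ≤ deriv (fun s => G v (Function.update x e s) j) (x e))

/-- the activation status indicator ξ_e(t) of a link -/
def xi (ρmax : N.E → ℝ) (ρ : ℝ → N.E → ℝ) (t : ℝ) (e : N.E) : ℝ :=
  if ρ t e < ρmax e then 1 else 0

/-- the activation status indicator χ_v(t) = 1 - ∏_{e ∈ E⁺_v} (1 - ξ_e(t)) of a
non-destination node (the destination is always active) -/
def chi (ρmax : N.E → ℝ) (ρ : ℝ → N.E → ℝ) (t : ℝ) (v : Fin (N.n + 1)) : ℝ :=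
  if v = N.destination then 1
  else 1 - ∏ e ∈ N.outLinks v, (1 - N.xi ρmax ρ t e)

/-- the incoming flow λ_v(t) at node `v`: the constant inflow `λ0` at the origin,
and Σ_{e ∈ E⁻_v} f_e(t) with f_e(t) = μ_e(ρ_e(t)) otherwise -/
def nodeInflow (μ : N.E → ℝ → ℝ) (lam0 : ℝ) (ρ : ℝ → N.E → ℝ) (t : ℝ)
    (v : Fin (N.n + 1)) : ℝ :=
  if v = N.origin then lam0 else ∑ e ∈ N.inLinks v, μ e (ρ t e)

/-- the right-hand side of the dynamics:
χ_{σ(e)}(t) λ_{σ(e)}(t) G^{σ(e)}_e(ρ(t)) - χ_{τ(e)}(t) f_e(t) -/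
def rhs (ρmax : N.E → ℝ) (μ : N.E → ℝ → ℝ)
    (G : Fin (N.n + 1) → (N.E → ℝ) → N.E → ℝ) (lam0 : ℝ)
    (ρ : ℝ → N.E → ℝ) (t : ℝ) (e : N.E) : ℝ :=
  N.chi ρmax ρ t (N.src e) * N.nodeInflow μ lam0 ρ t (N.src e) * G (N.src e) (ρ t) e -
    N.chi ρmax ρ t (N.dst e) * μ e (ρ t e)

/-- `ρ : [0,∞) → cl(Γ)` is a solution of the dynamical network, in integral form -/
def IsSolution (ρmax : N.E → ℝ) (μ : N.E → ℝ → ℝ)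
    (G : Fin (N.n + 1) → (N.E → ℝ) → N.E → ℝ) (lam0 : ℝ)
    (ρ : ℝ → N.E → ℝ) : Prop :=
  (∀ t, 0 ≤ t → ρ t ∈ N.clGamma ρmax) ∧
  ∀ e, ∀ t, 0 ≤ t →
    ρ t e = ρ 0 e + ∫ s in (0:ℝ)..t, N.rhs ρmax μ G lam0 ρ s e

/-- the dynamical network is transferring w.r.t. the initial density of the solution `ρ`:
`lim_{t→∞} (1/t) ∫₀ᵗ λ_n(s) ds = λ0` -/
def Transferring (μ : N.E → ℝ → ℝ) (lam0 : ℝ) (ρ : ℝ → N.E → ℝ) : Prop :=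
  Tendsto (fun t => (1 / t) * ∫ s in (0:ℝ)..t, N.nodeInflow μ lam0 ρ s N.destination)
    atTop (𝓝 lam0)

/-- `ρ0 ∈ Γ` is an equilibrium density vector for the dynamical network -/
def IsEquilibriumDensity (ρmax : N.E → ℝ) (μ : N.E → ℝ → ℝ)
    (G : Fin (N.n + 1) → (N.E → ℝ) → N.E → ℝ) (lam0 : ℝ) (ρ0 : N.E → ℝ) : Prop :=
  (∀ e, ρ0 e ∈ Ico 0 (ρmax e)) ∧
  (∀ e ∈ N.outLinks N.origin, lam0 * G N.origin ρ0 e = μ e (ρ0 e)) ∧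
  ∀ v, v ≠ N.origin → v ≠ N.destination → ∀ e ∈ N.outLinks v,
    (∑ e' ∈ N.inLinks v, μ e' (ρ0 e')) * G v ρ0 e = μ e (ρ0 e)

/-- `μt` is an admissible perturbation of the flow functions `μ` -/
def IsAdmissiblePerturbation (ρmax : N.E → ℝ) (μ μt : N.E → ℝ → ℝ) : Prop :=
  N.IsFlowFunctions ρmax μt ∧ ∀ e, ∀ x ∈ Icc 0 (ρmax e), μt e x ≤ μ e x

/-- the magnitude ‖δ‖₁ = Σ_e sup_{ρ_e ∈ [0,ρ^max_e]} (μ_e(ρ_e) - μ̃_e(ρ_e)) of an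
admissible perturbation -/
def perturbationMagnitude (ρmax : N.E → ℝ) (μ μt : N.E → ℝ → ℝ) : ℝ :=
  ∑ e : N.E, sSup ((fun x => μ e x - μt e x) '' Icc 0 (ρmax e))

/-- the margin of resilience γ(ρ°): the infimum of the magnitudes of the admissible
perturbations for which the perturbed dynamical network is not transferring with
respect to the initial density ρ° (`+∞` if there is no such perturbation) -/
def marginOfResilience (ρmax : N.E → ℝ) (μ : N.E → ℝ → ℝ)
    (G : Fin (N.n + 1) → (N.E → ℝ) → N.E → ℝ) (lam0 : ℝ) (ρ0 : N.E → ℝ) : ℝ≥0∞ :=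
  sInf {m | ∃ μt : N.E → ℝ → ℝ, N.IsAdmissiblePerturbation ρmax μ μt ∧
    (∃ ρ : ℝ → N.E → ℝ, N.IsSolution ρmax μt G lam0 ρ ∧ (∀ e, ρ 0 e = ρ0 e) ∧
      ¬ N.Transferring μt lam0 ρ) ∧
    m = ENNReal.ofReal (N.perturbationMagnitude ρmax μ μt)}

end FlowNetwork

end


/-- The example network: nodes `{0, 1, 2}` (origin `0`, destination `2`), with links
`e1 : 0 → 2`, `e2 : 0 → 1`, `e3 : 1 → 2` and `e4 : 1 → 2`. -/
def exampleNetwork : FlowNetwork where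
  n := 2
  npos := by norm_num
  E := Fin 4
  fintE := inferInstance
  decE := inferInstance
  src := ![0, 0, 1, 1]
  dst := ![2, 1, 2, 2]
  src_lt_dst := by decide

/-!
The direct link `e1` from the origin to the destination has flow capacity `3`, while the inflow
is `2`. A perturbation of magnitude at most `0.6` lowers its flow function by at most `0.6`, so
once its density is close to the density capacity, `e1` discharges more than `2`, which bounds
what the origin can route into it. Hence `e1` never saturates and the origin stays active. At an
active origin, conservation of mass reads `Σ_e dρ_e/dt = λ0 - λ_n`; the densities are bounded, so
the time-averaged outflow `λ_n` tends to `λ0`.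

The dynamics is only given in integral form, so the right-hand side must first be shown to be
integrable: each density is a.e.-measurable in time (as a constant plus a primitive wherever the
integral is defined), and the right-hand side is continuous on each stratum of states with a
fixed set of saturated links.
-/

theorem continuousOn_primitive_of_intervalIntegrable {f : ℝ → ℝ} {J : Set ℝ}
    (hJ : ∀ t ∈ J, 0 ≤ t ∧ IntervalIntegrable f volume 0 t) :
    ContinuousOn (fun t => ∫ s in (0:ℝ)..t, f s) J := by
  have hprim : ∀ t ∈ J, ContinuousOn (fun t => ∫ s in (0:ℝ)..t, f s) (Icc 0 t) := fun t ht => by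
    simpa [uIcc_of_le (hJ t ht).1] using
      intervalIntegral.continuousOn_primitive_interval' (hJ t ht).2 left_mem_uIcc
  intro t₀ ht₀
  by_cases hlast : ∃ t₁ ∈ J, t₀ < t₁
  · obtain ⟨t₁, ht₁, hlt⟩ := hlast
    refine (hprim t₁ ht₁ t₀ ⟨(hJ t₀ ht₀).1, hlt.le⟩).mono_of_mem_nhdsWithin ?_
    filter_upwards [self_mem_nhdsWithin, nhdsWithin_le_nhds (Iio_mem_nhds hlt)] with t ht htlt
    exact ⟨(hJ t ht).1, le_of_lt htlt⟩
  · push Not at hlast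
    exact (hprim t₀ ht₀ t₀ ⟨(hJ t₀ ht₀).1, le_rfl⟩).mono fun t ht => ⟨(hJ t ht).1, hlast t ht⟩

theorem aemeasurable_of_eq_add_primitive {f F : ℝ → ℝ} {c : ℝ}
    (hF : ∀ t, 0 ≤ t → F t = c + ∫ s in (0:ℝ)..t, f s) :
    AEMeasurable F (volume.restrict (Ioi 0)) := by
  set J := {t : ℝ | 0 ≤ t ∧ IntervalIntegrable f volume 0 t}
  have hJ : MeasurableSet J := by
    refine Set.OrdConnected.measurableSet ⟨?_⟩
    rintro x ⟨hx, -⟩ y ⟨hy, hyi⟩ z hz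
    exact ⟨hx.trans hz.1, hyi.mono_set
      (uIcc_subset_uIcc left_mem_uIcc (mem_uIcc_of_le (hx.trans hz.1) hz.2))⟩
  rw [← inter_union_sdiff (Ioi (0:ℝ)) J, aemeasurable_union_iff]
  constructor
  · refine ContinuousOn.aemeasurable ?_ (measurableSet_Ioi.inter hJ)
    refine ((continuousOn_const.add (continuousOn_primitive_of_intervalIntegrable
      fun t ht => ht)).mono inter_subset_right).congr fun t ht => hF t ht.2.1
  · refine ContinuousOn.aemeasurable ((continuousOn_const (c := c)).congr fun t ht => ?_)
      (measurableSet_Ioi.diff hJ)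
    obtain ⟨ht, htJ⟩ := ht
    rw [hF t (le_of_lt ht), intervalIntegral.integral_undef fun hi => htJ ⟨le_of_lt ht, hi⟩,
      add_zero]

theorem AEMeasurable.comp_of_continuousOn_pieces {α β γ ι : Type*} [MeasurableSpace α]
    [TopologicalSpace β] [MeasurableSpace β] [OpensMeasurableSpace β] [TopologicalSpace γ]
    [MeasurableSpace γ] [BorelSpace γ] [Countable ι] {μ : Measure α} {f : α → β} {g : β → γ}
    {P : ι → Set β} (hP : ∀ i, MeasurableSet (P i)) (hg : ∀ i, ContinuousOn g (P i))
    (hf : AEMeasurable f μ) (hmem : ∀ᵐ a ∂μ, f a ∈ ⋃ i, P i) : AEMeasurable (g ∘ f) μ := by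
  have hg' : AEMeasurable g ((μ.map f).restrict (⋃ i, P i)) :=
    aemeasurable_iUnion_iff.2 fun i => (hg i).aemeasurable (hP i)
  have hmem' : ∀ᵐ b ∂μ.map f, b ∈ ⋃ i, P i := (ae_map_iff hf (MeasurableSet.iUnion hP)).2 hmem
  rw [Measure.restrict_eq_self_of_ae_mem hmem'] at hg'
  exact hg'.comp_aemeasurable hf

theorem lt_of_eq_add_primitive_of_nonpos {f g : ℝ → ℝ} {a b : ℝ} (hab : a < b)
    (hf : ∀ t, 0 ≤ t → f t = f 0 + ∫ s in (0:ℝ)..t, g s)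
    (hg : ∀ t, 0 ≤ t → IntervalIntegrable g volume 0 t) (h0 : f 0 ≤ a)
    (hneg : ∀ s, 0 ≤ s → a < f s → f s < b → g s ≤ 0) {t : ℝ} (ht : 0 ≤ t) : f t < b := by
  have hcont : ContinuousOn f (Icc 0 t) :=
    (continuousOn_const.add (continuousOn_primitive_of_intervalIntegrable
      fun s hs => ⟨hs.1, hg s hs.1⟩)).congr fun s hs => hf s hs.1
  by_contra! hbt
  -- `T` is the first time `f` reaches `b`, and `T'` the last time before `T` with `f ≤ a`;
  -- on `(T', T)` the integrand is nonpositive, yet `f` rises by at least `b - a`.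
  set A := {s ∈ Icc 0 t | b ≤ f s}
  have hAbdd : BddBelow A := ⟨0, fun s hs => hs.1.1⟩
  have hTA : sInf A ∈ A :=
    (hcont.preimage_isClosed_of_isClosed isClosed_Icc isClosed_Ici).csInf_mem
      ⟨t, ⟨ht, le_rfl⟩, hbt⟩ hAbdd
  set T := sInf A
  have hbefore : ∀ s ∈ Ico 0 T, f s < b := fun s hs =>
    lt_of_not_ge fun h => (csInf_le hAbdd ⟨⟨hs.1, hs.2.le.trans hTA.1.2⟩, h⟩).not_gt hs.2
  set B := {s ∈ Icc 0 T | f s ≤ a}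
  have hBbdd : BddAbove B := ⟨T, fun s hs => hs.1.2⟩
  have hTB : sSup B ∈ B :=
    ((hcont.mono (Icc_subset_Icc le_rfl hTA.1.2)).preimage_isClosed_of_isClosed isClosed_Icc
      isClosed_Iic).csSup_mem ⟨0, ⟨le_rfl, hTA.1.1⟩, h0⟩ hBbdd
  set T' := sSup B
  have hafter : ∀ s ∈ Ioc T' T, a < f s := fun s hs =>
    lt_of_not_ge fun h => (le_csSup hBbdd ⟨⟨hTB.1.1.trans hs.1.le, hs.2⟩, h⟩).not_gt hs.1
  have hT'T : T' < T := lt_of_le_of_ne hTB.1.2 fun h => by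
    have := hTB.2; rw [h] at this; linarith [hTA.2]
  have hint : ∫ s in T'..T, g s ≤ 0 := by
    rw [intervalIntegral.integral_of_le hT'T.le, integral_Ioc_eq_integral_Ioo]
    exact setIntegral_nonpos measurableSet_Ioo fun s hs =>
      hneg s (hTB.1.1.trans hs.1.le) (hafter s ⟨hs.1, hs.2.le⟩)
        (hbefore s ⟨hTB.1.1.trans hs.1.le, hs.2⟩)
  have hdiff : f T - f T' = ∫ s in T'..T, g s := by
    rw [hf T hTA.1.1, hf T' hTB.1.1, ← intervalIntegral.integral_interval_sub_left
      (hg T hTA.1.1) (hg T' hTB.1.1)]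
    ring
  linarith [hTA.2, hTB.2]

namespace FlowNetwork

variable {N : FlowNetwork} {ρmax : N.E → ℝ} {μ : N.E → ℝ → ℝ} {lam0 : ℝ} {fmax : N.E → ℝ}
  {G : Fin (N.n + 1) → (N.E → ℝ) → N.E → ℝ} {ρ : ℝ → N.E → ℝ} {t : ℝ}

theorem mem_outLinks {v : Fin (N.n + 1)} {e : N.E} : e ∈ N.outLinks v ↔ N.src e = v := by
  simp [outLinks]

theorem origin_ne_destination : N.origin ≠ N.destination := fun h => by
  have := congrArg Fin.val h
  simp only [origin, destination, Fin.val_zero, Fin.val_last] at this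
  exact N.npos.ne this

theorem src_ne_destination (e : N.E) : N.src e ≠ N.destination :=
  (lt_of_lt_of_le (N.src_lt_dst e) (Fin.le_last _)).ne

theorem outLinks_destination : N.outLinks N.destination = ∅ :=
  Finset.eq_empty_of_forall_notMem fun e he => N.src_ne_destination e (mem_outLinks.1 he)

theorem inLinks_origin : N.inLinks N.origin = ∅ :=
  Finset.eq_empty_of_forall_notMem fun e he => by
    simp only [inLinks, Finset.mem_filter, Finset.mem_univ, true_and] at he
    exact Fin.not_lt_zero _ (he ▸ N.src_lt_dst e)

theorem chi_destination : N.chi ρmax ρ t N.destination = 1 := if_pos rfl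

theorem chi_of_ne_destination {v : Fin (N.n + 1)} (hv : v ≠ N.destination) :
    N.chi ρmax ρ t v = if ∃ e ∈ N.outLinks v, ρ t e < ρmax e then 1 else 0 := by
  rw [chi, if_neg hv]
  split_ifs with h
  · obtain ⟨e, he, hlt⟩ := h
    rw [Finset.prod_eq_zero he (by simp [xi, hlt]), sub_zero]
  · push Not at h
    rw [Finset.prod_eq_one fun e he => by simp [xi, not_lt.2 (h e he)], sub_self]

theorem chi_mem_Icc (v : Fin (N.n + 1)) : N.chi ρmax ρ t v ∈ Icc 0 1 := by
  by_cases hv : v = N.destination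
  · simp [hv, chi_destination]
  · rw [chi_of_ne_destination hv]
    split_ifs <;> simp

/-- Property (a), extended to `J = E⁺_v` by taking `GJ = G v`. -/
theorem IsLocallyResponsive.exists_restriction (hG : N.IsLocallyResponsive ρmax G)
    {v : Fin (N.n + 1)} (hv : v ≠ N.destination) {J : Finset N.E} (hJ : J ⊆ N.outLinks v)
    (hJne : J.Nonempty) :
    ∃ GJ : (N.E → ℝ) → N.E → ℝ,
      (∀ j ∈ J, ContinuousOn (fun x => GJ x j) (N.gammaJ ρmax J)) ∧
      (∀ x ∈ N.gammaJ ρmax J, (∀ j ∈ J, 0 ≤ GJ x j) ∧ ∑ j ∈ J, GJ x j = 1) ∧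
      ∀ x ∈ N.gammaJ ρmax J, (∀ e ∈ N.outLinks v \ J, x e = ρmax e) →
        ∀ e ∈ N.outLinks v, G v x e = if e ∈ J then GJ x e else 0 := by
  obtain ⟨hloc, hsimplex, hcd, hrestr, -⟩ := hG v hv
  by_cases hall : J = N.outLinks v
  · subst hall
    exact ⟨G v, fun j _ => (hcd j).continuousOn,
      fun x hx => ⟨fun j _ => (hsimplex x hx).1 j, (hsimplex x hx).2.2⟩,
      fun x _ _ e he => (if_pos he).symm⟩
  obtain ⟨GJ, hGJc, hGJs, hGJlim⟩ := hrestr J hJ hJne hall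
  refine ⟨GJ, fun j hj => (hGJc j hj).continuousOn, hGJs, fun x hx hsat e he => ?_⟩
  rw [hloc x (fun e' => if e' ∈ N.outLinks v \ J then ρmax e' else x e') fun e' _ => by
    split_ifs with h
    exacts [hsat e' h, rfl]]
  split_ifs with heJ
  · exact ((hGJlim x hx).2 e heJ).2
  · exact ((hGJlim x hx).1 e (Finset.mem_sdiff.2 ⟨he, heJ⟩)).2

theorem IsLocallyResponsive.nonneg_and_sum_eq_one (hG : N.IsLocallyResponsive ρmax G)
    {v : Fin (N.n + 1)} (hv : v ≠ N.destination) {x : N.E → ℝ}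
    (hx : ∀ e ∈ N.outLinks v, x e ∈ Icc 0 (ρmax e)) (hfree : ∃ e ∈ N.outLinks v, x e < ρmax e) :
    (∀ e ∈ N.outLinks v, 0 ≤ G v x e) ∧ ∑ e ∈ N.outLinks v, G v x e = 1 := by
  set J := (N.outLinks v).filter fun e => x e < ρmax e
  obtain ⟨GJ, -, hGJ, hGv⟩ := hG.exists_restriction hv (Finset.filter_subset _ _)
    (hfree.imp fun e he => Finset.mem_filter.2 he)
  have hxJ : x ∈ N.gammaJ ρmax J := fun e he =>
    ⟨(hx e (Finset.mem_filter.1 he).1).1, (Finset.mem_filter.1 he).2⟩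
  have hGv := hGv x hxJ fun e he => by
    obtain ⟨he, heJ⟩ := Finset.mem_sdiff.1 he
    exact le_antisymm (hx e he).2 (not_lt.1 fun h => heJ (Finset.mem_filter.2 ⟨he, h⟩))
  refine ⟨fun e he => ?_, ?_⟩
  · rw [hGv e he]
    split_ifs with h
    exacts [(hGJ x hxJ).1 e h, le_rfl]
  · rw [Finset.sum_congr rfl hGv, Finset.sum_ite_mem,
      Finset.inter_eq_right.2 (Finset.filter_subset _ _), (hGJ x hxJ).2]

theorem IsLocallyResponsive.chi_mul_sum (hG : N.IsLocallyResponsive ρmax G)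
    {v : Fin (N.n + 1)} (hv : v ≠ N.destination) (hρ : ρ t ∈ N.clGamma ρmax) :
    N.chi ρmax ρ t v * ∑ e ∈ N.outLinks v, G v (ρ t) e = N.chi ρmax ρ t v := by
  rw [chi_of_ne_destination hv]
  split_ifs with h
  · rw [(hG.nonneg_and_sum_eq_one hv (fun e _ => hρ e) h).2, mul_one]
  · rw [zero_mul]

theorem IsLocallyResponsive.chi_mul_mem_Icc (hG : N.IsLocallyResponsive ρmax G)
    (hρ : ρ t ∈ N.clGamma ρmax) (e : N.E) :
    N.chi ρmax ρ t (N.src e) * G (N.src e) (ρ t) e ∈ Icc 0 1 := by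
  have he : e ∈ N.outLinks (N.src e) := mem_outLinks.2 rfl
  rw [chi_of_ne_destination (N.src_ne_destination e)]
  split_ifs with h
  · obtain ⟨hnn, hsum⟩ := hG.nonneg_and_sum_eq_one (N.src_ne_destination e) (fun e _ => hρ e) h
    rw [one_mul]
    exact ⟨hnn e he, hsum ▸ Finset.single_le_sum hnn he⟩
  · simp

theorem IsLocallyResponsive.sum_rhs (hG : N.IsLocallyResponsive ρmax G)
    (hρ : ρ t ∈ N.clGamma ρmax) :
    ∑ e, N.rhs ρmax μ G lam0 ρ t e =
      N.chi ρmax ρ t N.origin * lam0 - N.nodeInflow μ lam0 ρ t N.destination := by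
  set a : Fin (N.n + 1) → ℝ := fun v => N.chi ρmax ρ t v * N.nodeInflow μ lam0 ρ t v
  have hout : ∑ e, N.chi ρmax ρ t (N.src e) * N.nodeInflow μ lam0 ρ t (N.src e) *
      G (N.src e) (ρ t) e = ∑ v, (a v - if v = N.destination then a v else 0) := by
    rw [← Finset.sum_fiberwise Finset.univ N.src]
    refine Finset.sum_congr rfl fun v _ => ?_
    rw [Finset.sum_congr rfl fun e he => by rw [(Finset.mem_filter.1 he).2]]
    change ∑ e ∈ N.outLinks v, _ = _
    rw [← Finset.mul_sum]
    split_ifs with hv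
    · rw [hv, outLinks_destination, Finset.sum_empty, mul_zero, sub_self]
    · rw [mul_right_comm, hG.chi_mul_sum hv hρ, sub_zero]
  have hin : ∑ e, N.chi ρmax ρ t (N.dst e) * μ e (ρ t e) =
      ∑ v, (a v - if v = N.origin then a v else 0) := by
    rw [← Finset.sum_fiberwise Finset.univ N.dst]
    refine Finset.sum_congr rfl fun v _ => ?_
    rw [Finset.sum_congr rfl fun e he => by rw [(Finset.mem_filter.1 he).2]]
    change ∑ e ∈ N.inLinks v, _ = _
    rw [← Finset.mul_sum]
    split_ifs with hv
    · rw [hv, inLinks_origin, Finset.sum_empty, mul_zero, sub_self]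
    · simp only [a, nodeInflow, if_neg hv, sub_zero]
  simp only [rhs, Finset.sum_sub_distrib] at hout hin ⊢
  rw [hout, hin, Finset.sum_ite_eq',
    Finset.sum_ite_eq', if_pos (Finset.mem_univ _), if_pos (Finset.mem_univ _)]
  simp only [a, nodeInflow, if_neg origin_ne_destination.symm, chi_destination, if_true]
  ring

variable (N) in
def stratum (ρmax : N.E → ℝ) (S : Finset N.E) : Set (N.E → ℝ) :=
  {x | ∀ e, if e ∈ S then x e = ρmax e else x e ∈ Ico 0 (ρmax e)}

theorem measurableSet_stratum (S : Finset N.E) : MeasurableSet (N.stratum ρmax S) := by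
  simp only [stratum, Set.ofPred_forall]
  refine MeasurableSet.iInter fun e => ?_
  split_ifs
  · exact measurableSet_eq_fun (measurable_pi_apply e) measurable_const
  · exact measurable_pi_apply e measurableSet_Ico

theorem clGamma_subset_iUnion_stratum : N.clGamma ρmax ⊆ ⋃ S, N.stratum ρmax S := fun x hx =>
  mem_iUnion.2 ⟨Finset.univ.filter fun e => x e = ρmax e, fun e => by
    split_ifs with h
    · exact (Finset.mem_filter.1 h).2
    · exact ⟨(hx e).1, lt_of_le_of_ne (hx e).2 fun h' =>
        h (Finset.mem_filter.2 ⟨Finset.mem_univ _, h'⟩)⟩⟩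

theorem lt_iff_notMem_of_mem_stratum {S : Finset N.E} {x : N.E → ℝ}
    (hx : x ∈ N.stratum ρmax S) (e : N.E) : x e < ρmax e ↔ e ∉ S := by
  have := hx e
  split_ifs at this with h
  · simp [h, this]
  · simp [h, this.2]

theorem continuousOn_chi_stratum (S : Finset N.E) (v : Fin (N.n + 1)) :
    ContinuousOn (fun x => N.chi ρmax (fun _ => x) 0 v) (N.stratum ρmax S) := by
  rcases (N.stratum ρmax S).eq_empty_or_nonempty with h | ⟨y, hy⟩
  · simp [h]
  · refine (continuousOn_const (c := N.chi ρmax (fun _ => y) 0 v)).congr fun x hx => ?_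
    simp only [chi, xi, lt_iff_notMem_of_mem_stratum hx, lt_iff_notMem_of_mem_stratum hy]

theorem continuousOn_flow_stratum (hμ : ∀ e, ContinuousOn (μ e) (Ico 0 (ρmax e)))
    (S : Finset N.E) (e : N.E) :
    ContinuousOn (fun x : N.E → ℝ => μ e (x e)) (N.stratum ρmax S) := by
  by_cases he : e ∈ S
  · refine (continuousOn_const (c := μ e (ρmax e))).congr fun x hx => ?_
    have := hx e
    rw [if_pos he] at this
    simp [this]
  · exact (hμ e).comp (continuous_apply e).continuousOn fun x hx => by
      have := hx e
      rwa [if_neg he] at this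

theorem IsLocallyResponsive.continuousOn_chi_mul_stratum (hG : N.IsLocallyResponsive ρmax G)
    {v : Fin (N.n + 1)} (hv : v ≠ N.destination) {e : N.E} (he : e ∈ N.outLinks v)
    (S : Finset N.E) :
    ContinuousOn (fun x => N.chi ρmax (fun _ => x) 0 v * G v x e) (N.stratum ρmax S) := by
  by_cases hJ : (N.outLinks v \ S).Nonempty
  · obtain ⟨GJ, hGJc, -, hGv⟩ := hG.exists_restriction hv Finset.sdiff_subset hJ
    have hsub : N.stratum ρmax S ⊆ N.gammaJ ρmax (N.outLinks v \ S) := fun x hx e he => by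
      have := hx e
      rwa [if_neg (Finset.mem_sdiff.1 he).2] at this
    have hGv' : ∀ x ∈ N.stratum ρmax S,
        G v x e = if e ∈ N.outLinks v \ S then GJ x e else 0 := fun x hx => by
      refine hGv x (hsub hx) (fun e' he' => ?_) e he
      have := hx e'
      rwa [if_pos (by simp at he'; exact he'.2)] at this
    refine (continuousOn_chi_stratum S v).mul ?_
    split_ifs at hGv' with heJ
    · exact ((hGJc e heJ).mono hsub).congr hGv'
    · exact continuousOn_const.congr hGv'
  · refine (continuousOn_const (c := 0)).congr fun x hx => ?_
    rw [chi_of_ne_destination hv, if_neg, zero_mul]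
    rintro ⟨e', he', hlt⟩
    exact hJ ⟨e', Finset.mem_sdiff.2 ⟨he', (lt_iff_notMem_of_mem_stratum hx e').1 hlt⟩⟩

theorem IsLocallyResponsive.continuousOn_rhs_stratum (hG : N.IsLocallyResponsive ρmax G)
    (hμ : ∀ e, ContinuousOn (μ e) (Ico 0 (ρmax e))) (e : N.E) (S : Finset N.E) :
    ContinuousOn (fun x => N.rhs ρmax μ G lam0 (fun _ => x) 0 e) (N.stratum ρmax S) := by
  have hinflow : ∀ v, ContinuousOn (fun x => N.nodeInflow μ lam0 (fun _ => x) 0 v)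
      (N.stratum ρmax S) := fun v => by
    unfold nodeInflow
    split_ifs
    · exact continuousOn_const
    · exact continuousOn_finsetSum _ fun e' _ => continuousOn_flow_stratum hμ S e'
  refine (((hinflow (N.src e)).mul (hG.continuousOn_chi_mul_stratum (N.src_ne_destination e)
    (mem_outLinks.2 rfl) S)).sub ((continuousOn_chi_stratum S (N.dst e)).mul
    (continuousOn_flow_stratum hμ S e))).congr fun x _ => ?_
  simp only [rhs, Pi.mul_apply, Pi.sub_apply]
  ring

theorem IsLocallyResponsive.abs_rhs_le (hG : N.IsLocallyResponsive ρmax G)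
    (hμ : ∀ e, ∀ x ∈ Icc 0 (ρmax e), μ e x ∈ Icc 0 (fmax e)) (hlam0 : 0 ≤ lam0)
    (hρ : ρ t ∈ N.clGamma ρmax) (e : N.E) :
    |N.rhs ρmax μ G lam0 ρ t e| ≤ lam0 + ∑ e, fmax e := by
  have hflow : ∀ e, μ e (ρ t e) ∈ Icc 0 (fmax e) := fun e => hμ e _ (hρ e)
  have hflow_sum : ∀ s : Finset N.E, ∑ e ∈ s, μ e (ρ t e) ∈ Icc 0 (∑ e, fmax e) := fun s =>
    ⟨Finset.sum_nonneg fun e _ => (hflow e).1,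
      (Finset.sum_le_sum_of_subset_of_nonneg (Finset.subset_univ s) fun e _ _ =>
        (hflow e).1).trans (Finset.sum_le_sum fun e _ => (hflow e).2)⟩
  have hinflow : N.nodeInflow μ lam0 ρ t (N.src e) ∈ Icc 0 (lam0 + ∑ e, fmax e) := by
    unfold nodeInflow
    split_ifs
    · exact ⟨hlam0, le_add_of_nonneg_right ((hflow_sum ∅).1.trans (hflow_sum ∅).2)⟩
    · exact ⟨(hflow_sum _).1, (hflow_sum _).2.trans (le_add_of_nonneg_left hlam0)⟩
  have hflow_e : μ e (ρ t e) ≤ ∑ e, fmax e := by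
    simpa using (hflow_sum {e}).2
  obtain ⟨hcg0, hcg1⟩ := hG.chi_mul_mem_Icc hρ e
  obtain ⟨hc0, hc1⟩ := N.chi_mem_Icc (ρmax := ρmax) (ρ := ρ) (t := t) (N.dst e)
  unfold rhs
  apply abs_sub_le_of_nonneg_of_le <;> nlinarith [hinflow.1, hinflow.2, (hflow e).1]

theorem IsFlowFunctions.le_of_hasMaxFlowCapacities (hμ : N.IsFlowFunctions ρmax μ)
    (hfmax : N.HasMaxFlowCapacities ρmax μ fmax) (hρmax : ∀ e, 0 < ρmax e) {e : N.E} {x : ℝ}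
    (hx : x ∈ Icc 0 (ρmax e)) : μ e x ≤ fmax e := by
  obtain ⟨hnn, -, hmono, -, hmax⟩ := hμ e
  refine ge_of_tendsto (hfmax e) ?_
  rcases hx.2.eq_or_lt with h | h
  · filter_upwards [Ioo_mem_nhdsLT (hρmax e)] with y hy
    rw [h, hmax]
    exact hnn y (Ioo_subset_Icc_self hy)
  · filter_upwards [Ioo_mem_nhdsLT h] with y hy
    exact hmono.monotoneOn ⟨hx.1, h⟩ ⟨hx.1.trans hy.1.le, hy.2⟩ hy.1.le

theorem sub_le_perturbationMagnitude (hρmax : ∀ e, 0 < ρmax e) (hμ : N.IsFlowFunctions ρmax μ)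
    (hfmax : N.HasMaxFlowCapacities ρmax μ fmax) {μt : N.E → ℝ → ℝ}
    (hadm : N.IsAdmissiblePerturbation ρmax μ μt) {e : N.E} {x : ℝ} (hx : x ∈ Icc 0 (ρmax e)) :
    μ e x - μt e x ≤ N.perturbationMagnitude ρmax μ μt := by
  have hbdd : ∀ e, BddAbove ((fun x => μ e x - μt e x) '' Icc 0 (ρmax e)) := fun e => by
    refine ⟨fmax e, ?_⟩
    rintro _ ⟨y, hy, rfl⟩
    linarith [hμ.le_of_hasMaxFlowCapacities hfmax hρmax hy, (hadm.1 e).1 y hy]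
  calc μ e x - μt e x ≤ sSup ((fun x => μ e x - μt e x) '' Icc 0 (ρmax e)) :=
        le_csSup (hbdd e) ⟨x, hx, rfl⟩
    _ ≤ N.perturbationMagnitude ρmax μ μt :=
        Finset.single_le_sum (f := fun e => sSup ((fun x => μ e x - μt e x) '' Icc 0 (ρmax e)))
          (fun e _ => le_csSup_of_le (hbdd e) ⟨0, ⟨le_rfl, (hρmax e).le⟩, rfl⟩
            (sub_nonneg.2 (hadm.2 e 0 ⟨le_rfl, (hρmax e).le⟩))) (Finset.mem_univ e)

theorem ofReal_le_marginOfResilience {ρ0 : N.E → ℝ} {m : ℝ}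
    (h : ∀ μt, N.IsAdmissiblePerturbation ρmax μ μt → N.perturbationMagnitude ρmax μ μt ≤ m →
      ∀ ρ, N.IsSolution ρmax μt G lam0 ρ → (∀ e, ρ 0 e = ρ0 e) → N.Transferring μt lam0 ρ) :
    ENNReal.ofReal m ≤ N.marginOfResilience ρmax μ G lam0 ρ0 := by
  refine le_sInf ?_
  rintro _ ⟨μt, hadm, ⟨ρ, hsol, hinit, hnt⟩, rfl⟩
  exact ENNReal.ofReal_le_ofReal (le_of_not_ge fun hle => hnt (h μt hadm hle ρ hsol hinit))

theorem IsSolution.intervalIntegrable_rhs (hsol : N.IsSolution ρmax μ G lam0 ρ)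
    (hG : N.IsLocallyResponsive ρmax G) (hμ : N.IsFlowFunctions ρmax μ)
    (hfmax : ∀ e, ∀ x ∈ Icc 0 (ρmax e), μ e x ≤ fmax e) (hlam0 : 0 ≤ lam0) (e : N.E)
    (ht : 0 ≤ t) : IntervalIntegrable (fun s => N.rhs ρmax μ G lam0 ρ s e) volume 0 t := by
  have hρ : AEMeasurable ρ (volume.restrict (Ioi 0)) :=
    aemeasurable_pi_lambda _ fun e => aemeasurable_of_eq_add_primitive (hsol.2 e)
  have hmeas : AEMeasurable (fun s => N.rhs ρmax μ G lam0 ρ s e) (volume.restrict (Ioi 0)) :=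
    AEMeasurable.comp_of_continuousOn_pieces (g := fun x => N.rhs ρmax μ G lam0 (fun _ => x) 0 e)
      measurableSet_stratum (hG.continuousOn_rhs_stratum (fun e => (hμ e).2.1.continuousOn) e) hρ
      ((ae_restrict_mem measurableSet_Ioi).mono fun s hs =>
        clGamma_subset_iUnion_stratum (hsol.1 s (le_of_lt hs)))
  rw [intervalIntegrable_iff_integrableOn_Ioc_of_le ht]
  refine ⟨(hmeas.mono_measure
      (Measure.restrict_mono Ioc_subset_Ioi_self le_rfl)).aestronglyMeasurable,
    HasFiniteIntegral.of_bounded (C := lam0 + ∑ e, fmax e) ?_⟩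
  filter_upwards [ae_restrict_mem measurableSet_Ioc] with s hs
  exact hG.abs_rhs_le (fun e x hx => ⟨(hμ e).1 x hx, hfmax e x hx⟩) hlam0 (hsol.1 s hs.1.le) e

theorem IsSolution.transferring_of_origin_active (hsol : N.IsSolution ρmax μ G lam0 ρ)
    (hG : N.IsLocallyResponsive ρmax G)
    (hint : ∀ e t, 0 ≤ t → IntervalIntegrable (fun s => N.rhs ρmax μ G lam0 ρ s e) volume 0 t)
    (hactive : ∀ t, 0 ≤ t → N.chi ρmax ρ t N.origin = 1) : N.Transferring μ lam0 ρ := by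
  set D := fun t => ∑ e, (ρ t e - ρ 0 e)
  have hD : ∀ t, 0 ≤ t →
      ∫ s in (0:ℝ)..t, N.nodeInflow μ lam0 ρ s N.destination = lam0 * t - D t := fun t ht => by
    calc ∫ s in (0:ℝ)..t, N.nodeInflow μ lam0 ρ s N.destination
        = ∫ s in (0:ℝ)..t, (lam0 - ∑ e, N.rhs ρmax μ G lam0 ρ s e) :=
          intervalIntegral.integral_congr fun s hs => by
            have hs0 : 0 ≤ s := by rw [uIcc_of_le ht] at hs; exact hs.1
            simp only [hG.sum_rhs (hsol.1 s hs0), hactive s hs0]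
            ring
      _ = lam0 * t - ∑ e, ∫ s in (0:ℝ)..t, N.rhs ρmax μ G lam0 ρ s e := by
          rw [intervalIntegral.integral_sub intervalIntegrable_const (by
              simpa only [Finset.sum_fn] using
                IntervalIntegrable.sum Finset.univ fun e _ => hint e t ht),
            intervalIntegral.integral_const,
            intervalIntegral.integral_finsetSum fun e _ => hint e t ht]
          simp [mul_comm]
      _ = lam0 * t - D t := by
          simp only [D, fun e => hsol.2 e t ht, add_sub_cancel_left]
  have hDbdd : ∀ t, 0 ≤ t → ‖D t‖ ≤ ∑ e, ρmax e := fun t ht =>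
    (norm_sum_le _ _).trans (Finset.sum_le_sum fun e _ => by
      have h1 := hsol.1 t ht e
      have h2 := hsol.1 0 le_rfl e
      rw [Real.norm_eq_abs, abs_le]
      constructor <;> linarith [h1.1, h1.2, h2.1, h2.2])
  have hlim : Tendsto (fun t => t⁻¹ * D t) atTop (𝓝 0) :=
    tendsto_inv_atTop_zero.zero_mul_isBoundedUnder_le
      (isBoundedUnder_of_eventually_le ((eventually_ge_atTop 0).mono hDbdd))
  refine (by simpa using (tendsto_const_nhds (x := lam0)).sub hlim :
    Tendsto (fun t => lam0 - t⁻¹ * D t) atTop (𝓝 lam0)).congr' ?_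
  filter_upwards [eventually_gt_atTop 0] with t ht
  rw [hD t ht.le]
  field_simp

theorem IsSolution.density_lt_of_lam0_le_flow (hsol : N.IsSolution ρmax μ G lam0 ρ)
    (hG : N.IsLocallyResponsive ρmax G)
    (hint : ∀ e t, 0 ≤ t → IntervalIntegrable (fun s => N.rhs ρmax μ G lam0 ρ s e) volume 0 t)
    (hlam0 : 0 ≤ lam0) {e : N.E} (hsrc : N.src e = N.origin) (hdst : N.dst e = N.destination)
    {x₀ : ℝ} (hx₀ : ρ 0 e ≤ x₀) (hx₀max : x₀ < ρmax e)
    (hflow : ∀ y ∈ Ioo x₀ (ρmax e), lam0 ≤ μ e y) (ht : 0 ≤ t) : ρ t e < ρmax e := by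
  refine lt_of_eq_add_primitive_of_nonpos hx₀max (hsol.2 e) (hint e) hx₀
    (fun s hs h1 h2 => ?_) ht
  have hcg := (hG.chi_mul_mem_Icc (hsol.1 s hs) e).2
  have hμs := hflow _ ⟨h1, h2⟩
  rw [hsrc] at hcg
  simp only [rhs, nodeInflow, hsrc, hdst, chi_destination, if_true]
  nlinarith

theorem IsSolution.transferring_of_direct_link (hρmax : ∀ e, 0 < ρmax e)
    (hμ : N.IsFlowFunctions ρmax μ) (hfmax : N.HasMaxFlowCapacities ρmax μ fmax)
    (hG : N.IsLocallyResponsive ρmax G) (hlam0 : 0 ≤ lam0) {μt : N.E → ℝ → ℝ}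
    (hadm : N.IsAdmissiblePerturbation ρmax μ μt) (hsol : N.IsSolution ρmax μt G lam0 ρ)
    {e : N.E} (hsrc : N.src e = N.origin) (hdst : N.dst e = N.destination) {δ : ℝ}
    (hδ : ∀ x ∈ Icc 0 (ρmax e), μ e x - μt e x ≤ δ) (hcap : lam0 + δ < fmax e)
    (h0 : ρ 0 e < ρmax e) : N.Transferring μt lam0 ρ := by
  have hint := fun e t (ht : 0 ≤ t) => hsol.intervalIntegrable_rhs hG hadm.1
    (fun e x hx => (hadm.2 e x hx).trans (hμ.le_of_hasMaxFlowCapacities hfmax hρmax hx)) hlam0 e ht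
  obtain ⟨x₀, hμx₀, hx₀⟩ := (((hfmax e).eventually (eventually_gt_nhds hcap)).and
    (Ioo_mem_nhdsLT h0)).exists
  have hx₀0 : 0 ≤ x₀ := (hsol.1 0 le_rfl e).1.trans hx₀.1.le
  have hflow : ∀ y ∈ Ioo x₀ (ρmax e), lam0 ≤ μt e y := fun y hy => by
    have hmono := (hμ e).2.2.1.monotoneOn ⟨hx₀0, hx₀.2⟩ ⟨hx₀0.trans hy.1.le, hy.2⟩ hy.1.le
    linarith [hδ y ⟨hx₀0.trans hy.1.le, hy.2.le⟩]
  refine hsol.transferring_of_origin_active hG hint fun t ht => ?_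
  rw [chi_of_ne_destination origin_ne_destination]
  exact if_pos ⟨e, mem_outLinks.2 hsrc,
    hsol.density_lt_of_lam0_le_flow hG hint hlam0 hsrc hdst hx₀.1.le hx₀.2 hflow ht⟩

end FlowNetwork

theorem exampleNetwork_minResidualCapacity :
    exampleNetwork.minResidualCapacity ![3, 1.5, 0.75, 0.75] ![1, 1, 0.5, 0.5] = 0.5 := by
  have hres0 : exampleNetwork.residualCapacity ![3, 1.5, 0.75, 0.75] ![1, 1, 0.5, 0.5] 0 = 2.5 := by
    simp only [FlowNetwork.residualCapacity, FlowNetwork.outLinks, Finset.sum_filter]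
    change ∑ e : Fin 4, (if ![(0 : Fin 3), 0, 1, 1] e = 0 then
      ![(3:ℝ), 1.5, 0.75, 0.75] e - ![1, 1, 0.5, 0.5] e else 0) = 2.5
    simp [Fin.sum_univ_four]
    norm_num
  have hres1 : exampleNetwork.residualCapacity ![3, 1.5, 0.75, 0.75] ![1, 1, 0.5, 0.5] 1 = 0.5 := by
    simp only [FlowNetwork.residualCapacity, FlowNetwork.outLinks, Finset.sum_filter]
    change ∑ e : Fin 4, (if ![(0 : Fin 3), 0, 1, 1] e = 1 then
      ![(3:ℝ), 1.5, 0.75, 0.75] e - ![1, 1, 0.5, 0.5] e else 0) = 0.5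
    simp [Fin.sum_univ_four]
    norm_num
  refine IsLeast.csInf_eq ⟨⟨1, by decide, hres1.symm⟩, ?_⟩
  rintro _ ⟨v, hv, rfl⟩
  obtain rfl | rfl : v = 0 ∨ v = 1 := by revert v; decide
  · rw [hres0]; norm_num
  · rw [hres1]

theorem example_margin_exceeds_min_residual_general
    (ρmax : exampleNetwork.E → ℝ) (hρmax : ∀ e, 0 < ρmax e)
    (μ : exampleNetwork.E → ℝ → ℝ) (hμ : exampleNetwork.IsFlowFunctions ρmax μ)
    (hfmax : exampleNetwork.HasMaxFlowCapacities ρmax μ ![3, 1.5, 0.75, 0.75])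
    (G : Fin (exampleNetwork.n + 1) → (exampleNetwork.E → ℝ) → exampleNetwork.E → ℝ)
    (hG : exampleNetwork.IsLocallyResponsive ρmax G)
    (ρ0 : exampleNetwork.E → ℝ)
    (hρ0 : exampleNetwork.IsEquilibriumDensity ρmax μ G 2 ρ0) :
    exampleNetwork.minResidualCapacity ![3, 1.5, 0.75, 0.75] ![1, 1, 0.5, 0.5] = 0.5 ∧
    (∀ μt : exampleNetwork.E → ℝ → ℝ,
      exampleNetwork.IsAdmissiblePerturbation ρmax μ μt →
      exampleNetwork.perturbationMagnitude ρmax μ μt ≤ 0.6 →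
      ∀ ρ : ℝ → exampleNetwork.E → ℝ, exampleNetwork.IsSolution ρmax μt G 2 ρ →
        (∀ e, ρ 0 e = ρ0 e) → exampleNetwork.Transferring μt 2 ρ) ∧
    ENNReal.ofReal 0.6 ≤ exampleNetwork.marginOfResilience ρmax μ G 2 ρ0 := by
  refine ⟨exampleNetwork_minResidualCapacity, fun μt hadm hmag ρ hsol hinit => ?_,
    FlowNetwork.ofReal_le_marginOfResilience fun μt hadm hmag ρ hsol hinit => ?_⟩ <;>
  exact hsol.transferring_of_direct_link hρmax hμ hfmax hG zero_le_two hadm (e := (0 : Fin 4))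
    rfl rfl
    (fun x hx => (FlowNetwork.sub_le_perturbationMagnitude hρmax hμ hfmax hadm hx).trans hmag)
    (by norm_num) (hinit (0 : Fin 4) ▸ (hρ0.1 (0 : Fin 4)).2)

/-- In the example network with `f^max = (3, 1.5, 0.75, 0.75)`, inflow `λ0 = 2` and
equilibrium flows `f° = (1, 1, 0.5, 0.5)`, the minimal node residual capacity is
`R(f°) = 0.5`, yet every admissible perturbation of magnitude at most `0.6` leaves the
network transferring, so that `γ(ρ°) ≥ 0.6 > R(f°)`: with finite density capacities the
margin of resilience can strictly exceed the minimal node residual capacity. -/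
theorem example_margin_exceeds_min_residual
    (ρmax : exampleNetwork.E → ℝ) (hρmax : ∀ e, 0 < ρmax e)
    (μ : exampleNetwork.E → ℝ → ℝ) (hμ : exampleNetwork.IsFlowFunctions ρmax μ)
    (hfmax : exampleNetwork.HasMaxFlowCapacities ρmax μ ![3, 1.5, 0.75, 0.75])
    (G : Fin (exampleNetwork.n + 1) → (exampleNetwork.E → ℝ) → exampleNetwork.E → ℝ)
    (hG : exampleNetwork.IsLocallyResponsive ρmax G)
    (ρ0 : exampleNetwork.E → ℝ)
    (hρ0 : exampleNetwork.IsEquilibriumDensity ρmax μ G 2 ρ0)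
    (hflow : ∀ e, μ e (ρ0 e) = ![1, 1, 0.5, 0.5] e) :
    exampleNetwork.minResidualCapacity ![3, 1.5, 0.75, 0.75] ![1, 1, 0.5, 0.5] = 0.5 ∧
    (∀ μt : exampleNetwork.E → ℝ → ℝ,
      exampleNetwork.IsAdmissiblePerturbation ρmax μ μt →
      exampleNetwork.perturbationMagnitude ρmax μ μt ≤ 0.6 →
      ∀ ρ : ℝ → exampleNetwork.E → ℝ, exampleNetwork.IsSolution ρmax μt G 2 ρ →
        (∀ e, ρ 0 e = ρ0 e) → exampleNetwork.Transferring μt 2 ρ) ∧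
    ENNReal.ofReal 0.6 ≤ exampleNetwork.marginOfResilience ρmax μ G 2 ρ0 :=
  example_margin_exceeds_min_residual_general ρmax hρmax μ hμ hfmax G hG ρ0 hρ0
end
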